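/- arXiv:1205.2430 — 2 statements merged into one kernel-verified Lean document; each statement's English description precedes it below -/
import Mathlib

section
/- Let φ be an N-function of class C¹ on [0,∞) and C² on (0,∞) with φ'(t) ∼ t φ''(t) uniformly in t > 0. For a ≥ 0 define the shifted function φ_a by φ_a'(t) := φ'(a+t)·t/(a+t). Then for all a ≥ 0: φ_a(t) ∼ φ(t) for t ≥ a, and φ_a(t) ∼ φ''(a) t² for 0 ≤ t ≤ a (when a > 0), with constants depending only on the characteristics of φ. -/
open Set Filter MeasureTheory

def IsNFunction (ψ ψ' : ℝ → ℝ) : Prop :=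
  ψ 0 = 0 ∧
  (∀ t ∈ Set.Ici (0:ℝ), HasDerivWithinAt ψ (ψ' t) (Set.Ici 0) t) ∧
  MonotoneOn ψ' (Set.Ici 0) ∧
  (∀ t ∈ Set.Ici (0:ℝ), ContinuousWithinAt ψ' (Set.Ici t) t) ∧
  ψ' 0 = 0 ∧
  (∀ t > (0:ℝ), 0 < ψ' t) ∧
  Filter.Tendsto ψ' Filter.atTop Filter.atTop

/-- The shifted N-function `φ_a(t) = ∫₀ᵗ φ'(a+s) · s/(a+s) ds`. -/
noncomputable def shiftFn (φ' : ℝ → ℝ) (a t : ℝ) : ℝ :=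
  ∫ s in (0:ℝ)..t, φ' (a + s) * s / (a + s)

/-!
For `t ≥ a` the integrand `φ'(a+s) s/(a+s)` of `φ_a` is squeezed between `φ'(s)/3` (when
`s ≥ t/2`) and `φ'(2t)`, and for `s ≤ a` between `φ'(a) s/(2a)` and `φ'(2a) s/a`. The upper
bound `t φ''(t) ≤ c₂ φ'(t)` makes `φ'(t) t^(-c₂)` antitone, so `φ'(2t) ≤ 2^c₂ φ'(t)`; with the
convexity bounds `t/2 · φ'(t/2) ≤ φ(t) ≤ t φ'(t)` this gives `φ_a(t) ∼ φ(t)` for `t ≥ a`. For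
`t ≤ a`, integrating gives `φ_a(t) ∼ φ'(a) t²/a`, and `φ'(a)/a ∼ φ''(a)` by the two-sided
hypothesis.
-/

namespace IsNFunction

variable {φ φ' : ℝ → ℝ}

lemma apply_zero (hN : IsNFunction φ φ') : φ 0 = 0 := hN.1

lemma deriv_zero (hN : IsNFunction φ φ') : φ' 0 = 0 := hN.2.2.2.2.1

lemma deriv_le_deriv (hN : IsNFunction φ φ') {u v : ℝ} (hu : 0 ≤ u) (huv : u ≤ v) :
    φ' u ≤ φ' v :=
  hN.2.2.1 (mem_Ici.mpr hu) (mem_Ici.mpr (hu.trans huv)) huv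

lemma deriv_nonneg (hN : IsNFunction φ φ') {t : ℝ} (ht : 0 ≤ t) : 0 ≤ φ' t :=
  hN.deriv_zero ▸ hN.deriv_le_deriv le_rfl ht

lemma sub_mem_Icc (hN : IsNFunction φ φ') {u v : ℝ} (hu : 0 ≤ u) (huv : u ≤ v) :
    φ v - φ u ∈ Icc (φ' u * (v - u)) (φ' v * (v - u)) := by
  have hderiv := hN.2.1
  rcases huv.eq_or_lt with rfl | huv
  · simp
  have hcont : ContinuousOn φ (Icc u v) := fun x hx =>
    ((hderiv x (hu.trans hx.1)).continuousWithinAt).mono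
      (Icc_subset_Ici_self.trans (Ici_subset_Ici.mpr hu))
  have hderiv' : ∀ x ∈ Ioo u v, HasDerivAt φ (φ' x) x := fun x hx =>
    (hderiv x (hu.trans hx.1.le)).hasDerivAt (Ici_mem_nhds (hu.trans_lt hx.1))
  obtain ⟨x, hx, hslope⟩ := exists_hasDerivAt_eq_slope φ φ' huv hcont hderiv'
  have hvu : 0 < v - u := sub_pos.mpr huv
  rw [eq_div_iff hvu.ne'] at hslope
  have hux := hN.deriv_le_deriv hu hx.1.le
  have hxv := hN.deriv_le_deriv (hu.trans hx.1.le) hx.2.le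
  rw [← hslope]
  exact ⟨mul_le_mul_of_nonneg_right hux hvu.le, mul_le_mul_of_nonneg_right hxv hvu.le⟩

lemma le_mul_deriv (hN : IsNFunction φ φ') {t : ℝ} (ht : 0 ≤ t) : φ t ≤ t * φ' t := by
  have h := (hN.sub_mem_Icc le_rfl ht).2
  rw [hN.apply_zero] at h
  linarith

lemma half_mul_deriv_half_le (hN : IsNFunction φ φ') {t : ℝ} (ht : 0 ≤ t) :
    t / 2 * φ' (t / 2) ≤ φ t := by
  have h := (hN.sub_mem_Icc (by linarith : 0 ≤ t / 2) (by linarith : t / 2 ≤ t)).1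
  have h' := (hN.sub_mem_Icc le_rfl (by linarith : 0 ≤ t / 2)).1
  rw [hN.apply_zero, hN.deriv_zero] at h'
  linarith

lemma nonneg (hN : IsNFunction φ φ') {t : ℝ} (ht : 0 ≤ t) : 0 ≤ φ t :=
  (mul_nonneg (by linarith) (hN.deriv_nonneg (by linarith))).trans (hN.half_mul_deriv_half_le ht)

end IsNFunction

section Doubling

variable {g g' : ℝ → ℝ} {c : ℝ}

lemma antitoneOn_mul_rpow_neg (hd : ∀ t > 0, HasDerivAt g (g' t) t)
    (hle : ∀ t > 0, t * g' t ≤ c * g t) : AntitoneOn (fun x => g x * x ^ (-c)) (Ioi 0) := by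
  have hderiv : ∀ x ∈ Ioi (0:ℝ),
      HasDerivAt (fun x => g x * x ^ (-c)) (g' x * x ^ (-c) + g x * (-c * x ^ (-c - 1))) x :=
    fun x hx => (hd x hx).mul (Real.hasDerivAt_rpow_const (Or.inl (ne_of_gt hx)))
  refine antitoneOn_of_hasDerivWithinAt_nonpos (convex_Ioi 0)
    (fun x hx => (hderiv x hx).continuousAt.continuousWithinAt)
    (fun x hx => (hderiv x (interior_subset hx)).hasDerivWithinAt) ?_
  rw [interior_Ioi]
  intro x (hx : 0 < x)
  have hpow : x ^ (-c) = x * x ^ (-c - 1) := by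
    rw [mul_comm, ← Real.rpow_add_one hx.ne']
    ring_nf
  calc g' x * x ^ (-c) + g x * (-c * x ^ (-c - 1))
      = (x * g' x - c * g x) * x ^ (-c - 1) := by rw [hpow]; ring
    _ ≤ 0 := mul_nonpos_of_nonpos_of_nonneg (by linarith [hle x hx])
        (Real.rpow_nonneg hx.le _)

lemma le_two_rpow_mul_of_mul_deriv_le (hd : ∀ t > 0, HasDerivAt g (g' t) t)
    (hle : ∀ t > 0, t * g' t ≤ c * g t) {x : ℝ} (hx : 0 < x) : g (2 * x) ≤ 2 ^ c * g x := by
  have h2x : 0 < 2 * x := by positivity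
  have h := antitoneOn_mul_rpow_neg hd hle (mem_Ioi.mpr hx) (mem_Ioi.mpr h2x) (by linarith)
  simp only at h
  rw [Real.rpow_neg h2x.le, Real.rpow_neg hx.le, ← div_eq_mul_inv, ← div_eq_mul_inv,
    div_le_div_iff₀ (by positivity) (by positivity), Real.mul_rpow zero_le_two hx.le] at h
  have hxc : 0 < x ^ c := Real.rpow_pos_of_pos hx c
  nlinarith

end Doubling

section Integrals

variable {f : ℝ → ℝ}

lemma MonotoneOn.intervalIntegral_mem_Icc {u v : ℝ} (huv : u ≤ v) (hf : MonotoneOn f (Icc u v)) :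
    ∫ x in u..v, f x ∈ Icc ((v - u) * f u) ((v - u) * f v) := by
  have hint : IntervalIntegrable f volume u v :=
    MonotoneOn.intervalIntegrable (by rwa [uIcc_of_le huv])
  have hu := left_mem_Icc.mpr huv
  have hv := right_mem_Icc.mpr huv
  constructor
  · simpa [mul_comm] using intervalIntegral.integral_mono_on huv intervalIntegrable_const hint
      fun x hx => hf hu hx hx.1
  · simpa [mul_comm] using intervalIntegral.integral_mono_on huv hint intervalIntegrable_const
      fun x hx => hf hx hv hx.2

lemma intervalIntegral_mem_Icc_of_mul_id_le {t k K : ℝ} (ht : 0 ≤ t)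
    (hf : IntervalIntegrable f volume 0 t) (hbound : ∀ s ∈ Icc 0 t, k * s ≤ f s ∧ f s ≤ K * s) :
    ∫ s in (0:ℝ)..t, f s ∈ Icc (k * (t ^ 2 / 2)) (K * (t ^ 2 / 2)) := by
  have hlin : ∀ m : ℝ, ∫ s in (0:ℝ)..t, m * s = m * (t ^ 2 / 2) := fun m => by
    rw [intervalIntegral.integral_const_mul, integral_id]
    ring
  have hint : ∀ m : ℝ, IntervalIntegrable (fun s => m * s) volume 0 t := fun m =>
    (continuous_const.mul continuous_id).intervalIntegrable 0 t
  rw [← hlin k, ← hlin K]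
  exact ⟨intervalIntegral.integral_mono_on ht (hint k) hf fun s hs => (hbound s hs).1,
    intervalIntegral.integral_mono_on ht hf (hint K) fun s hs => (hbound s hs).2⟩

end Integrals

/-- The integrand `φ_a'` of the shifted N-function `φ_a`. -/
noncomputable def shiftFnDeriv (φ' : ℝ → ℝ) (a s : ℝ) : ℝ :=
  φ' (a + s) * s / (a + s)

section Shift

variable {φ φ' : ℝ → ℝ} {a s : ℝ}

lemma shiftFn_eq_integral (t : ℝ) : shiftFn φ' a t = ∫ s in (0:ℝ)..t, shiftFnDeriv φ' a s := rfl

lemma shiftFnDeriv_monotoneOn (hN : IsNFunction φ φ') (ha : 0 ≤ a) :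
    MonotoneOn (shiftFnDeriv φ' a) (Ici 0) := by
  intro x (hx : 0 ≤ x) y (hy : 0 ≤ y) hxy
  have hratio : x / (a + x) ≤ y / (a + y) := by
    rcases hx.eq_or_lt with rfl | hx
    · simp only [zero_div]
      positivity
    rw [div_le_div_iff₀ (by linarith) (by linarith)]
    nlinarith
  simp only [shiftFnDeriv, mul_div_assoc]
  exact mul_le_mul (hN.deriv_le_deriv (by linarith) (by linarith)) hratio (by positivity)
    (hN.deriv_nonneg (by linarith))

lemma shiftFnDeriv_le (hN : IsNFunction φ φ') (ha : 0 ≤ a) (hs : 0 ≤ s) :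
    shiftFnDeriv φ' a s ≤ φ' (a + s) := by
  rw [shiftFnDeriv, mul_div_assoc]
  exact mul_le_of_le_one_right (hN.deriv_nonneg (by linarith)) (div_le_one_of_le₀ (by linarith)
    (by linarith))

lemma deriv_div_three_le_shiftFnDeriv (hN : IsNFunction φ φ') (ha : 0 ≤ a) (hs : 0 ≤ s)
    (has : a ≤ 2 * s) : φ' s / 3 ≤ shiftFnDeriv φ' a s := by
  rcases hs.eq_or_lt with rfl | hs
  · simp [hN.deriv_zero, shiftFnDeriv]
  have hmono : φ' s ≤ φ' (a + s) := hN.deriv_le_deriv hs.le (by linarith)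
  have hratio : 1 / 3 ≤ s / (a + s) := by
    rw [div_le_div_iff₀ (by norm_num) (by linarith)]
    linarith
  calc φ' s / 3 = φ' s * (1 / 3) := by ring
    _ ≤ φ' (a + s) * (s / (a + s)) := mul_le_mul hmono hratio (by norm_num)
        (hN.deriv_nonneg (by linarith))
    _ = shiftFnDeriv φ' a s := by rw [shiftFnDeriv, mul_div_assoc]

lemma shiftFnDeriv_mem_Icc_of_le (hN : IsNFunction φ φ') (ha : 0 < a) (hs : 0 ≤ s)
    (hsa : s ≤ a) : shiftFnDeriv φ' a s ∈ Icc (φ' a / (2 * a) * s) (φ' (2 * a) / a * s) := by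
  have hmono : φ' a ≤ φ' (a + s) ∧ φ' (a + s) ≤ φ' (2 * a) :=
    ⟨hN.deriv_le_deriv ha.le (by linarith), hN.deriv_le_deriv (by linarith) (by linarith)⟩
  have hratio : s / (2 * a) ≤ s / (a + s) ∧ s / (a + s) ≤ s / a :=
    ⟨div_le_div_of_nonneg_left hs (by linarith) (by linarith),
      div_le_div_of_nonneg_left hs ha (by linarith)⟩
  have hφ'a := hN.deriv_nonneg ha.le
  rw [shiftFnDeriv, mul_div_assoc, div_mul_eq_mul_div, mul_div_assoc, div_mul_eq_mul_div,
    mul_div_assoc]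
  exact ⟨mul_le_mul hmono.1 hratio.1 (by positivity) (by linarith),
    mul_le_mul hmono.2 hratio.2 (by positivity) (by linarith)⟩

lemma intervalIntegrable_shiftFnDeriv (hN : IsNFunction φ φ') (ha : 0 ≤ a) {u v : ℝ}
    (hu : 0 ≤ u) (hv : 0 ≤ v) : IntervalIntegrable (shiftFnDeriv φ' a) volume u v :=
  ((shiftFnDeriv_monotoneOn hN ha).mono fun _ hx =>
    mem_Ici.mpr (le_min hu hv |>.trans hx.1)).intervalIntegrable

lemma intervalIntegral_shiftFnDeriv_mem_Icc (hN : IsNFunction φ φ') (ha : 0 ≤ a) {u v : ℝ}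
    (hu : 0 ≤ u) (huv : u ≤ v) :
    ∫ s in u..v, shiftFnDeriv φ' a s ∈
      Icc ((v - u) * shiftFnDeriv φ' a u) ((v - u) * shiftFnDeriv φ' a v) :=
  MonotoneOn.intervalIntegral_mem_Icc huv
    ((shiftFnDeriv_monotoneOn hN ha).mono fun _ hx => mem_Ici.mpr (hu.trans hx.1))

variable {p : ℝ} (hp : 0 < p) (hdbl : ∀ x > 0, φ' (2 * x) ≤ p * φ' x)
include hp hdbl

theorem shiftFn_mem_Icc_of_le (hN : IsNFunction φ φ') (ha : 0 ≤ a) {t : ℝ} (hat : a ≤ t) :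
    shiftFn φ' a t ∈ Icc (1 / (6 * p) * φ t) (2 * p ^ 2 * φ t) := by
  have ht := ha.trans hat
  rcases ht.eq_or_lt with rfl | ht
  · simp [shiftFn, hN.apply_zero]
  have hφ'half : φ' t ≤ p * φ' (t / 2) := by
    simpa [mul_div_cancel₀] using hdbl (t / 2) (by linarith)
  constructor
  · obtain ⟨hfirst, -⟩ :=
      intervalIntegral_shiftFnDeriv_mem_Icc hN ha le_rfl (by linarith : 0 ≤ t / 2)
    obtain ⟨hsecond, -⟩ :=
      intervalIntegral_shiftFnDeriv_mem_Icc hN ha (by linarith) (by linarith : t / 2 ≤ t)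
    rw [shiftFn_eq_integral, ← intervalIntegral.integral_add_adjacent_intervals
      (intervalIntegrable_shiftFnDeriv hN ha le_rfl (by linarith : 0 ≤ t / 2))
      (intervalIntegrable_shiftFnDeriv hN ha (by linarith : 0 ≤ t / 2) ht.le)]
    have hzero : shiftFnDeriv φ' a 0 = 0 := by simp [shiftFnDeriv]
    rw [hzero, mul_zero] at hfirst
    calc 1 / (6 * p) * φ t ≤ 1 / (6 * p) * (p * (t * φ' (t / 2))) := by
          gcongr
          nlinarith [hN.le_mul_deriv ht.le]
      _ = t / 2 * (φ' (t / 2) / 3) := by field_simp; ring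
      _ ≤ (t - t / 2) * shiftFnDeriv φ' a (t / 2) := by
          rw [show t - t / 2 = t / 2 by ring]
          gcongr
          exact deriv_div_three_le_shiftFnDeriv hN ha (by linarith) (by linarith)
      _ ≤ _ := le_add_of_nonneg_of_le hfirst hsecond
  · obtain ⟨-, hupper⟩ := intervalIntegral_shiftFnDeriv_mem_Icc hN ha le_rfl ht.le
    calc shiftFn φ' a t ≤ (t - 0) * shiftFnDeriv φ' a t := hupper
      _ ≤ t * φ' (a + t) := by
          rw [sub_zero]
          gcongr
          exact shiftFnDeriv_le hN ha ht.le
      _ ≤ t * φ' (2 * t) := by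
          gcongr
          exact hN.deriv_le_deriv (by linarith) (by linarith)
      _ ≤ t * (p * (p * φ' (t / 2))) := by
          gcongr
          exact (hdbl t ht).trans (by gcongr)
      _ = 2 * p ^ 2 * (t / 2 * φ' (t / 2)) := by ring
      _ ≤ 2 * p ^ 2 * φ t := by
          gcongr
          exact hN.half_mul_deriv_half_le ht.le

theorem shiftFn_mem_Icc_of_ge (hN : IsNFunction φ φ') {c₁ c₂ d : ℝ} (hc₁ : 0 < c₁) (hc₂ : 0 < c₂)
    (ha : 0 < a) (hd : c₁ * φ' a ≤ a * d ∧ a * d ≤ c₂ * φ' a) {t : ℝ} (ht : 0 ≤ t) (hta : t ≤ a) :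
    shiftFn φ' a t ∈ Icc (1 / (4 * c₂) * (d * t ^ 2)) (p / (2 * c₁) * (d * t ^ 2)) := by
  obtain ⟨hlow, hupp⟩ := intervalIntegral_mem_Icc_of_mul_id_le ht
    (intervalIntegrable_shiftFnDeriv hN ha.le le_rfl ht)
    fun s hs => shiftFnDeriv_mem_Icc_of_le hN ha hs.1 (hs.2.trans hta)
  constructor
  · calc 1 / (4 * c₂) * (d * t ^ 2) ≤ 1 / (4 * c₂) * (c₂ * φ' a / a * t ^ 2) := by
          gcongr
          rw [le_div_iff₀ ha]
          linarith
      _ = φ' a / (2 * a) * (t ^ 2 / 2) := by field_simp; ring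
      _ ≤ _ := hlow
  · calc shiftFn φ' a t ≤ φ' (2 * a) / a * (t ^ 2 / 2) := hupp
      _ ≤ p * φ' a / a * (t ^ 2 / 2) := by gcongr; exact hdbl a ha
      _ = p / (2 * c₁) * (c₁ * φ' a / a * t ^ 2) := by field_simp
      _ ≤ p / (2 * c₁) * (d * t ^ 2) := by
          gcongr
          rw [div_le_iff₀ ha]
          linarith

end Shift

/-- For `φ` an N-function, `C¹` on `[0,∞)`, `C²` on `(0,∞)`, with `φ'(t) ∼ t φ''(t)`:
`φ_a(t) ∼ φ(t)` for `t ≥ a` and `φ_a(t) ∼ φ''(a) t²` for `0 ≤ t ≤ a` (`a > 0`),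
with constants depending only on the characteristics of `φ`. -/
theorem shifted_equiv (c₁ c₂ : ℝ) (hc₁ : 0 < c₁) (hc₂ : 0 < c₂) :
    ∃ c C : ℝ, 0 < c ∧ 0 < C ∧
      ∀ φ φ' φ'' : ℝ → ℝ, IsNFunction φ φ' →
        (∀ t > (0:ℝ), HasDerivAt φ' (φ'' t) t) →
        (∀ t > (0:ℝ), ContinuousAt φ'' t) →
        (∀ t > (0:ℝ), c₁ * φ' t ≤ t * φ'' t ∧ t * φ'' t ≤ c₂ * φ' t) →
        ∀ a ≥ (0:ℝ),
          (∀ t, a ≤ t → c * φ t ≤ shiftFn φ' a t ∧ shiftFn φ' a t ≤ C * φ t) ∧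
          (0 < a → ∀ t, 0 ≤ t → t ≤ a →
            c * (φ'' a * t ^ 2) ≤ shiftFn φ' a t ∧
              shiftFn φ' a t ≤ C * (φ'' a * t ^ 2)) := by
  set p : ℝ := 2 ^ c₂
  have hp : 0 < p := by positivity
  refine ⟨min (1 / (6 * p)) (1 / (4 * c₂)), max (2 * p ^ 2) (p / (2 * c₁)), by positivity,
    by positivity, fun φ φ' φ'' hN hderiv _ hcomp a ha => ?_⟩
  have hdbl : ∀ x > 0, φ' (2 * x) ≤ p * φ' x := fun x hx =>
    le_two_rpow_mul_of_mul_deriv_le hderiv (fun t ht => (hcomp t ht).2) hx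
  refine ⟨fun t hat => ?_, fun ha₀ t ht hta => ?_⟩
  · have hφ := hN.nonneg (ha.trans hat)
    obtain ⟨hlow, hupp⟩ := shiftFn_mem_Icc_of_le hp hdbl hN ha hat
    exact ⟨(mul_le_mul_of_nonneg_right (min_le_left _ _) hφ).trans hlow,
      hupp.trans (mul_le_mul_of_nonneg_right (le_max_left _ _) hφ)⟩
  · have hφ'' : 0 ≤ φ'' a * t ^ 2 := by
      have := mul_nonneg hc₁.le (hN.deriv_nonneg ha)
      nlinarith [(hcomp a ha₀).1]
    obtain ⟨hlow, hupp⟩ := shiftFn_mem_Icc_of_ge hp hdbl hN hc₁ hc₂ ha₀ (hcomp a ha₀) ht hta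
    exact ⟨(mul_le_mul_of_nonneg_right (min_le_right _ _) hφ'').trans hlow,
      hupp.trans (mul_le_mul_of_nonneg_right (le_max_right _ _) hφ'')⟩
end

section
/- Suppose f : ℝ^{N×n} → ℝ is strictly W^{1,φ}-quasiconvex in the sense that ∫_B [f(Q + ∇w) − f(Q)] dx ≥ k ∫_B φ_{|Q|}(|∇w|) dx for all balls B, all Q ∈ ℝ^{N×n}, and all w ∈ C¹₀(B; ℝ^N), and that f is C² away from 0. Then for every Q ∈ ℝ^{N×n} \ {0}, every ball B, and every w ∈ C¹₀(B; ℝ^N), ∫_B (D²f)(Q)(∇w, ∇w) dx ≥ c φ''(|Q|) ∫_B |∇w|² dx, where c > 0 depends only on k and the characteristics of φ. -/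
open Set Filter MeasureTheory Metric

/-- The gradient of `w : ℝⁿ → ℝ^N` at `x`, viewed as a matrix in `ℝ^{N×n}`. -/
noncomputable def gradMat {n N : ℕ}
    (w : EuclideanSpace ℝ (Fin n) → EuclideanSpace ℝ (Fin N))
    (x : EuclideanSpace ℝ (Fin n)) : EuclideanSpace ℝ (Fin N × Fin n) :=
  WithLp.toLp 2 (fun p : Fin N × Fin n => fderiv ℝ w x (EuclideanSpace.single p.2 1) p.1)

/-!
Testing quasiconvexity with `±t w` and adding, the second difference
`f(Q + t∇w) + f(Q - t∇w) - 2 f(Q)` integrates to at least `2k ∫ φ_{|Q|}(t|∇w|)`. For `s ≤ a` the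
shifted N-function satisfies `φ_a(s) ≥ φ'(a) s² / (4a)`, since `φ_a'(s) = φ'(a + s) s / (a + s)`,
so for small `t` this is at least `t² k φ'(|Q|) / (2|Q|) ∫ |∇w|²`. Taylor's formula at `Q`,
uniform over the bounded values of `∇w`, bounds the same integral by
`t² ∫ D²f(Q)(∇w, ∇w) + o(t²)`. Dividing by `t²` and letting `t → 0` gives the claim with
`c = k / (2 c₂)`, because `|Q| φ''(|Q|) ≤ c₂ φ'(|Q|)`.
-/

section shiftFn

variable {φ' : ℝ → ℝ} {a : ℝ}

theorem monotoneOn_shiftFn_integrand (ha : 0 < a) (hmono : MonotoneOn φ' (Ici 0))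
    (h0 : 0 ≤ φ' 0) : MonotoneOn (fun u => φ' (a + u) * u / (a + u)) (Ici 0) := by
  intro u₁ (h₁ : 0 ≤ u₁) u₂ (h₂ : 0 ≤ u₂) h12
  have hφ : φ' (a + u₁) ≤ φ' (a + u₂) :=
    hmono (mem_Ici.2 (by linarith)) (mem_Ici.2 (by linarith)) (by linarith)
  have hφ₁ : 0 ≤ φ' (a + u₁) :=
    h0.trans (hmono (mem_Ici.2 le_rfl) (mem_Ici.2 (by linarith)) (by linarith))
  have hfrac : u₁ / (a + u₁) ≤ u₂ / (a + u₂) := by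
    rw [div_le_div_iff₀ (by linarith) (by linarith)]; nlinarith
  simpa only [mul_div_assoc] using mul_le_mul hφ hfrac (by positivity) (hφ₁.trans hφ)

theorem intervalIntegrable_shiftFn_integrand (ha : 0 < a) (hmono : MonotoneOn φ' (Ici 0))
    (h0 : 0 ≤ φ' 0) {s : ℝ} (hs : 0 ≤ s) :
    IntervalIntegrable (fun u => φ' (a + u) * u / (a + u)) volume 0 s :=
  ((monotoneOn_shiftFn_integrand ha hmono h0).mono fun _ hu => by
    rw [uIcc_of_le hs] at hu; exact hu.1).intervalIntegrable

theorem continuousOn_shiftFn (ha : 0 < a) (hmono : MonotoneOn φ' (Ici 0)) (h0 : 0 ≤ φ' 0)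
    {b : ℝ} (hb : 0 ≤ b) : ContinuousOn (shiftFn φ' a) (Icc 0 b) := by
  have := intervalIntegral.continuousOn_primitive_interval'
    (intervalIntegrable_shiftFn_integrand ha hmono h0 hb) left_mem_uIcc
  rwa [uIcc_of_le hb] at this

theorem mul_sq_le_shiftFn (ha : 0 < a) (hmono : MonotoneOn φ' (Ici 0)) (h0 : 0 ≤ φ' 0)
    {s : ℝ} (hs : 0 ≤ s) (hsa : s ≤ a) : φ' a / (4 * a) * s ^ 2 ≤ shiftFn φ' a s := by
  have hφa : 0 ≤ φ' a := h0.trans (hmono (mem_Ici.2 le_rfl) ha.le ha.le)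
  calc φ' a / (4 * a) * s ^ 2 = ∫ u in (0:ℝ)..s, φ' a / (2 * a) * u := by
        rw [intervalIntegral.integral_const_mul, integral_id]; ring
    _ ≤ shiftFn φ' a s := by
      refine intervalIntegral.integral_mono_on hs
        ((continuous_const.mul continuous_id).intervalIntegrable _ _)
        (intervalIntegrable_shiftFn_integrand ha hmono h0 hs) fun u ⟨hu0, hus⟩ => ?_
      have hφ : φ' a ≤ φ' (a + u) := hmono ha.le (mem_Ici.2 (by linarith)) (by linarith)
      have hfrac : u / (2 * a) ≤ u / (a + u) :=
        div_le_div_of_nonneg_left hu0 (by linarith) (by linarith)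
      calc φ' a / (2 * a) * u = φ' a * (u / (2 * a)) := by ring
        _ ≤ φ' (a + u) * (u / (a + u)) := mul_le_mul hφ hfrac (by positivity) (hφa.trans hφ)
        _ = φ' (a + u) * u / (a + u) := by ring

end shiftFn

section SecondDifference

variable {E : Type*} [NormedAddCommGroup E] [NormedSpace ℝ E]

theorem second_difference_le_of_norm_fderiv_sub_le {f : E → ℝ} (hf : Differentiable ℝ f)
    {Q : E} {B : E →L[ℝ] E →L[ℝ] ℝ} {ε δ : ℝ} (hε : 0 ≤ ε)
    (hfB : ∀ h : E, ‖h‖ ≤ δ → ‖fderiv ℝ f (Q + h) - fderiv ℝ f Q - B h‖ ≤ ε * ‖h‖)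
    {P : E} (hP : ‖P‖ ≤ δ) :
    f (Q + P) + f (Q - P) - 2 * f Q ≤ B P P + 2 * ε * ‖P‖ ^ 2 := by
  set r : E → E →L[ℝ] ℝ := fun h => fderiv ℝ f (Q + h) - fderiv ℝ f Q - B h
  set u : ℝ → ℝ := fun s => f (Q + s • P) + f (Q - s • P) - s ^ 2 * B P P
  -- `u' s = (f'(Q + sP) - f'(Q - sP) - 2 s B P) P`, written through the Taylor remainders of `f'`
  have hu : ∀ s, HasDerivAt u (r (s • P) P - r (-(s • P)) P) s := by
    intro s
    have hplus : HasDerivAt (fun s : ℝ => Q + s • P) P s := by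
      simpa using ((hasDerivAt_id s).smul_const P).const_add Q
    have hminus : HasDerivAt (fun s : ℝ => Q - s • P) (-P) s := by
      simpa using ((hasDerivAt_id s).smul_const P).const_sub Q
    refine ((((hf _).hasFDerivAt.comp_hasDerivAt s hplus).add
      ((hf _).hasFDerivAt.comp_hasDerivAt s hminus)).sub
      ((hasDerivAt_pow 2 s).mul_const (B P P))).congr_deriv ?_
    simp only [r, FunLike.coe_sub, Pi.sub_apply, map_neg, map_smul, ← sub_eq_add_neg,
      FunLike.coe_smul, Pi.smul_apply, smul_eq_mul]
    norm_num
    ring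
  have hr : ∀ s ∈ Ico (0:ℝ) 1, ‖r (s • P) P - r (-(s • P)) P‖ ≤ 2 * ε * ‖P‖ ^ 2 := by
    intro s ⟨hs0, hs1⟩
    have hsP : ‖s • P‖ ≤ ‖P‖ := by
      rw [norm_smul, Real.norm_of_nonneg hs0]; exact mul_le_of_le_one_left (norm_nonneg _) hs1.le
    have hr' : ∀ h : E, ‖h‖ ≤ ‖P‖ → ‖r h P‖ ≤ ε * ‖P‖ ^ 2 := fun h hh =>
      calc ‖r h P‖ ≤ ‖r h‖ * ‖P‖ := (r h).le_opNorm P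
        _ ≤ ε * ‖h‖ * ‖P‖ := by gcongr; exact hfB h (hh.trans hP)
        _ ≤ ε * ‖P‖ ^ 2 := by rw [sq, ← mul_assoc]; gcongr
    calc _ ≤ ‖r (s • P) P‖ + ‖r (-(s • P)) P‖ := norm_sub_le _ _
      _ ≤ ε * ‖P‖ ^ 2 + ε * ‖P‖ ^ 2 := add_le_add (hr' _ hsP) (hr' _ (by rwa [norm_neg]))
      _ = 2 * ε * ‖P‖ ^ 2 := by ring
  have hmvt := norm_image_sub_le_of_norm_deriv_le_segment' (fun s _ => (hu s).hasDerivWithinAt)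
    hr 1 (right_mem_Icc.2 zero_le_one)
  simp only [u, zero_smul, add_zero, sub_zero, one_smul, one_mul, mul_one, sq,
    mul_zero, zero_mul, Real.norm_eq_abs, abs_le] at hmvt
  linarith [hmvt.2]

theorem exists_second_difference_le {f : E → ℝ} (hf : Differentiable ℝ f) {Q : E}
    {B : E →L[ℝ] E →L[ℝ] ℝ} (hB : HasFDerivAt (fderiv ℝ f) B Q) {ε : ℝ} (hε : 0 < ε) :
    ∃ δ > 0, ∀ P : E, ‖P‖ ≤ δ → f (Q + P) + f (Q - P) - 2 * f Q ≤ B P P + ε * ‖P‖ ^ 2 := by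
  obtain ⟨δ, hδ, hδB⟩ := Metric.eventually_nhds_iff.1 (hB.isLittleO.def (half_pos hε))
  refine ⟨δ / 2, half_pos hδ, fun P hP => ?_⟩
  have hfB : ∀ h : E, ‖h‖ ≤ δ / 2 →
      ‖fderiv ℝ f (Q + h) - fderiv ℝ f Q - B h‖ ≤ ε / 2 * ‖h‖ := fun h hh => by
    simpa using hδB (y := Q + h) (by rw [dist_eq_norm, add_sub_cancel_left]; linarith)
  have := second_difference_le_of_norm_fderiv_sub_le hf (half_pos hε).le hfB hP
  linarith

end SecondDifference

section Integrals

variable {X : Type*} [TopologicalSpace X] [MeasurableSpace X] [OpensMeasurableSpace X]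
  {μ : Measure X} [IsFiniteMeasureOnCompacts μ] {S : Set X}

theorem HasCompactSupport.integrableOn_comp {F : Type*} [NormedAddCommGroup F] {g : X → F}
    (hgc : HasCompactSupport g) {Φ : F → ℝ} (hΦ0 : Φ 0 = 0)
    (hΦg : Continuous fun x => Φ (g x)) : IntegrableOn (fun x => Φ (g x)) S μ :=
  (hΦg.integrable_of_hasCompactSupport (hgc.comp_left hΦ0)).integrableOn

theorem mul_integral_sq_le_integral_shiftFn {φ' : ℝ → ℝ} {a : ℝ} (ha : 0 < a)
    (hmono : MonotoneOn φ' (Ici 0)) (h0 : 0 ≤ φ' 0) {g : X → ℝ} (hg : Continuous g)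
    (hgc : HasCompactSupport g) (hg0 : ∀ x, 0 ≤ g x) (hga : ∀ x, g x ≤ a) :
    φ' a / (4 * a) * ∫ x in S, g x ^ 2 ∂μ ≤ ∫ x in S, shiftFn φ' a (g x) ∂μ := by
  rw [← integral_const_mul]
  refine integral_mono (hgc.integrableOn_comp (Φ := fun s => φ' a / (4 * a) * s ^ 2)
    (by simp) (by fun_prop)) (hgc.integrableOn_comp intervalIntegral.integral_same
    ((continuousOn_shiftFn ha hmono h0 ha.le).comp_continuous hg fun x => ⟨hg0 x, hga x⟩))
    fun x => mul_sq_le_shiftFn ha hmono h0 (hg0 x) (hga x)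

variable {E : Type*} [NormedAddCommGroup E] {f : E → ℝ} {Q : E} {g : X → E}

theorem mul_integral_sq_le_integral_second_difference (hf : Continuous f) {φ' : ℝ → ℝ}
    {a k : ℝ} (ha : 0 < a) (hk : 0 ≤ k) (hmono : MonotoneOn φ' (Ici 0)) (h0 : 0 ≤ φ' 0)
    (hg : Continuous g) (hgc : HasCompactSupport g) (hga : ∀ x, ‖g x‖ ≤ a)
    (hplus : k * ∫ x in S, shiftFn φ' a ‖g x‖ ∂μ ≤ ∫ x in S, (f (Q + g x) - f Q) ∂μ)
    (hminus : k * ∫ x in S, shiftFn φ' a ‖g x‖ ∂μ ≤ ∫ x in S, (f (Q - g x) - f Q) ∂μ) :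
    k * φ' a / (2 * a) * ∫ x in S, ‖g x‖ ^ 2 ∂μ ≤
      ∫ x in S, (f (Q + g x) + f (Q - g x) - 2 * f Q) ∂μ := by
  have hshift := mul_integral_sq_le_integral_shiftFn (μ := μ) (S := S) ha hmono h0 hg.norm
    hgc.norm (fun x => norm_nonneg _) hga
  have hsum : ∫ x in S, (f (Q + g x) + f (Q - g x) - 2 * f Q) ∂μ =
      (∫ x in S, (f (Q + g x) - f Q) ∂μ) + ∫ x in S, (f (Q - g x) - f Q) ∂μ := by
    rw [← integral_add (hgc.integrableOn_comp (Φ := fun P => f (Q + P) - f Q) (by simp)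
      (by fun_prop)) (hgc.integrableOn_comp (Φ := fun P => f (Q - P) - f Q) (by simp)
      (by fun_prop))]
    congr 1 with x
    ring
  calc k * φ' a / (2 * a) * ∫ x in S, ‖g x‖ ^ 2 ∂μ
      = 2 * (k * (φ' a / (4 * a) * ∫ x in S, ‖g x‖ ^ 2 ∂μ)) := by field_simp; ring
    _ ≤ 2 * (k * ∫ x in S, shiftFn φ' a ‖g x‖ ∂μ) := by gcongr
    _ ≤ _ := by rw [hsum]; linarith

variable [NormedSpace ℝ E]

theorem integral_second_difference_le (hf : Differentiable ℝ f) {B : E →L[ℝ] E →L[ℝ] ℝ}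
    (hB : HasFDerivAt (fderiv ℝ f) B Q) {ε : ℝ} (hε : 0 < ε) :
    ∃ δ > 0, ∀ g : X → E, Continuous g → HasCompactSupport g → (∀ x, ‖g x‖ ≤ δ) →
      ∫ x in S, (f (Q + g x) + f (Q - g x) - 2 * f Q) ∂μ ≤
        ∫ x in S, B (g x) (g x) ∂μ + ε * ∫ x in S, ‖g x‖ ^ 2 ∂μ := by
  obtain ⟨δ, hδ, hfB⟩ := exists_second_difference_le hf hB hε
  refine ⟨δ, hδ, fun g hg hgc hgδ => ?_⟩
  have hBg : IntegrableOn (fun x => B (g x) (g x)) S μ :=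
    hgc.integrableOn_comp (Φ := fun P => B P P) (by simp) (by fun_prop)
  have hg2 : IntegrableOn (fun x => ‖g x‖ ^ 2) S μ :=
    hgc.integrableOn_comp (Φ := fun P => ‖P‖ ^ 2) (by simp) (by fun_prop)
  rw [← integral_const_mul, ← integral_add hBg (hg2.const_mul ε)]
  have hfc := hf.continuous
  exact integral_mono (hgc.integrableOn_comp (Φ := fun P => f (Q + P) + f (Q - P) - 2 * f Q)
      (by simp only [add_zero, sub_zero]; ring) (by fun_prop))
    (hBg.add (hg2.const_mul ε)) fun x => hfB (g x) (hgδ x)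

theorem mul_integral_sq_le_integral_hessian_of_shiftFn_le (hf : Differentiable ℝ f)
    {B : E →L[ℝ] E →L[ℝ] ℝ} (hB : HasFDerivAt (fderiv ℝ f) B Q) {φ' : ℝ → ℝ} {a k : ℝ}
    (ha : 0 < a) (hk : 0 ≤ k) (hmono : MonotoneOn φ' (Ici 0)) (h0 : 0 ≤ φ' 0)
    (hg : Continuous g) (hgc : HasCompactSupport g)
    (hqc : ∀ t : ℝ, k * ∫ x in S, shiftFn φ' a ‖t • g x‖ ∂μ ≤
      ∫ x in S, (f (Q + t • g x) - f Q) ∂μ) :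
    k * φ' a / (2 * a) * ∫ x in S, ‖g x‖ ^ 2 ∂μ ≤ ∫ x in S, B (g x) (g x) ∂μ := by
  set I₂ := ∫ x in S, ‖g x‖ ^ 2 ∂μ
  set IA := ∫ x in S, B (g x) (g x) ∂μ
  have hI₂ : 0 ≤ I₂ := integral_nonneg fun _ => sq_nonneg _
  obtain ⟨M, hM⟩ := hg.bounded_above_of_compact_support hgc
  refine le_of_forall_pos_le_add fun ε hε => ?_
  -- the Taylor error `ε' ∫ ‖g‖²` has to stay below `ε`
  set ε' := ε / (I₂ + 1)
  have hε' : 0 < ε' := by positivity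
  have hε'I₂ : ε' * I₂ ≤ ε := by
    rw [div_mul_eq_mul_div, div_le_iff₀ (by positivity)]; nlinarith
  obtain ⟨δ, hδ, hupper⟩ := integral_second_difference_le (μ := μ) (S := S) hf hB hε'
  set t := min δ a / (|M| + 1)
  have ht : 0 < t := div_pos (lt_min hδ ha) (by positivity)
  have htg : ∀ x, ‖t • g x‖ ≤ min δ a := fun x => by
    rw [norm_smul, Real.norm_of_nonneg ht.le]
    calc t * ‖g x‖ ≤ t * (|M| + 1) := by
          gcongr; exact (hM x).trans ((le_abs_self M).trans (by linarith))
      _ = min δ a := div_mul_cancel₀ _ (by positivity)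
  have hlower := mul_integral_sq_le_integral_second_difference (g := fun x => t • g x)
    hf.continuous ha hk hmono h0 (hg.const_smul t) hgc.smul_left
    (fun x => (htg x).trans (min_le_right _ _)) (hqc t)
    (by simpa only [neg_smul, norm_neg, ← sub_eq_add_neg] using hqc (-t))
  have := hlower.trans (hupper (fun x => t • g x) (hg.const_smul t) hgc.smul_left
    fun x => (htg x).trans (min_le_left _ _))
  simp only [norm_smul, map_smul, FunLike.coe_smul, Pi.smul_apply, smul_eq_mul, mul_pow,
    Real.norm_of_nonneg ht.le, integral_const_mul] at this
  have key : t ^ 2 * (k * φ' a / (2 * a) * I₂) ≤ t ^ 2 * (IA + ε' * I₂) := by linarith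
  linarith [le_of_mul_le_mul_left key (by positivity)]

end Integrals

section gradMat

variable {n N : ℕ} {w : EuclideanSpace ℝ (Fin n) → EuclideanSpace ℝ (Fin N)}

theorem continuous_gradMat (hw : ContDiff ℝ 1 w) : Continuous (gradMat w) :=
  (PiLp.continuous_toLp 2 _).comp <| continuous_pi fun p =>
    (EuclideanSpace.proj p.1).continuous.comp
      ((ContinuousLinearMap.apply ℝ _ (EuclideanSpace.single p.2 1)).continuous.comp
        (hw.continuous_fderiv one_ne_zero))

theorem hasCompactSupport_gradMat (hw : HasCompactSupport w) : HasCompactSupport (gradMat w) :=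
  (hw.fderiv ℝ).comp_left
    (g := fun L : EuclideanSpace ℝ (Fin n) →L[ℝ] EuclideanSpace ℝ (Fin N) =>
      WithLp.toLp 2 fun p : Fin N × Fin n => L (EuclideanSpace.single p.2 1) p.1)
    (by ext; simp)

theorem gradMat_const_smul (hw : ContDiff ℝ 1 w) (t : ℝ) :
    gradMat (fun y => t • w y) = t • gradMat w := by
  ext x p
  simp only [gradMat, fderiv_fun_const_smul (hw.differentiable one_ne_zero x) t,
    FunLike.coe_smul, Pi.smul_apply, PiLp.smul_apply]

end gradMat

theorem quasiconvex_legendre_hadamard_general (c₁ c₂ k : ℝ) (hc₂ : 0 < c₂)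
    (hk : 0 < k) :
    ∃ c : ℝ, 0 < c ∧
      ∀ (N n : ℕ) (φ φ' φ'' : ℝ → ℝ), IsNFunction φ φ' →
        (∀ t > (0:ℝ), HasDerivAt φ' (φ'' t) t) →
        (∀ t > (0:ℝ), ContinuousAt φ'' t) →
        (∀ t > (0:ℝ), c₁ * φ' t ≤ t * φ'' t ∧ t * φ'' t ≤ c₂ * φ' t) →
        ∀ f : EuclideanSpace ℝ (Fin N × Fin n) → ℝ,
          ContDiff ℝ 1 f →
          ContDiffOn ℝ 2 f {(0 : EuclideanSpace ℝ (Fin N × Fin n))}ᶜ →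
          -- strict W^{1,φ}-quasiconvexity
          (∀ (x₀ : EuclideanSpace ℝ (Fin n)) (r : ℝ), 0 < r →
            ∀ (Q : EuclideanSpace ℝ (Fin N × Fin n))
              (w : EuclideanSpace ℝ (Fin n) → EuclideanSpace ℝ (Fin N)),
              ContDiff ℝ 1 w → HasCompactSupport w → tsupport w ⊆ Metric.ball x₀ r →
              (∫ x in Metric.ball x₀ r, (f (Q + gradMat w x) - f Q)) ≥
                k * ∫ x in Metric.ball x₀ r, shiftFn φ' ‖Q‖ ‖gradMat w x‖) →
          ∀ (Q : EuclideanSpace ℝ (Fin N × Fin n)), Q ≠ 0 →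
            ∀ (x₀ : EuclideanSpace ℝ (Fin n)) (r : ℝ), 0 < r →
              ∀ w : EuclideanSpace ℝ (Fin n) → EuclideanSpace ℝ (Fin N),
                ContDiff ℝ 1 w → HasCompactSupport w →
                tsupport w ⊆ Metric.ball x₀ r →
                (∫ x in Metric.ball x₀ r,
                    fderiv ℝ (fderiv ℝ f) Q (gradMat w x) (gradMat w x)) ≥
                  c * φ'' ‖Q‖ * ∫ x in Metric.ball x₀ r, ‖gradMat w x‖ ^ 2 := by
  refine ⟨k / (2 * c₂), by positivity, ?_⟩
  rintro N n φ φ' φ'' ⟨-, -, hmono, -, hφ'0, -, -⟩ - - hchar f hf hf2 hqc Q hQ x₀ r hr w hw hwc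
    hwr
  have ha : 0 < ‖Q‖ := norm_pos_iff.2 hQ
  have hB : HasFDerivAt (fderiv ℝ f) (fderiv ℝ (fderiv ℝ f) Q) Q :=
    (((hf2.contDiffAt (isOpen_compl_singleton.mem_nhds hQ)).fderiv_right (m := 1)
      (by norm_num)).differentiableAt (by norm_num)).hasFDerivAt
  have hqc_smul : ∀ t : ℝ, k * ∫ x in ball x₀ r, shiftFn φ' ‖Q‖ ‖t • gradMat w x‖ ≤
      ∫ x in ball x₀ r, (f (Q + t • gradMat w x) - f Q) := fun t => by
    simpa only [gradMat_const_smul hw, Pi.smul_apply] using hqc x₀ r hr Q (fun y => t • w y)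
      (hw.const_smul t) (hwc.smul_left (f := fun _ => t))
      ((tsupport_smul_subset_right _ _).trans hwr)
  have hlower := mul_integral_sq_le_integral_hessian_of_shiftFn_le (hf.differentiable one_ne_zero) hB
    ha hk.le hmono hφ'0.ge (continuous_gradMat hw) (hasCompactSupport_gradMat hwc) hqc_smul
  have hc : k / (2 * c₂) * φ'' ‖Q‖ ≤ k * φ' ‖Q‖ / (2 * ‖Q‖) := by
    have := (hchar ‖Q‖ ha).2
    rw [div_mul_eq_mul_div, div_le_div_iff₀ (by positivity) (by positivity)]
    nlinarith
  exact (mul_le_mul_of_nonneg_right hc (integral_nonneg fun _ => sq_nonneg _)).trans hlower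

/-- If `f` is strictly `W^{1,φ}`-quasiconvex and `C²` away from `0`, then for every
`Q ≠ 0`, every ball `B` and every `w ∈ C¹₀(B; ℝ^N)`,
`∫_B D²f(Q)(∇w, ∇w) ≥ c φ''(|Q|) ∫_B |∇w|²` with `c = c(k, characteristics of φ)`. -/
theorem quasiconvex_legendre_hadamard (c₁ c₂ k : ℝ) (hc₁ : 0 < c₁) (hc₂ : 0 < c₂)
    (hk : 0 < k) :
    ∃ c : ℝ, 0 < c ∧
      ∀ (N n : ℕ) (φ φ' φ'' : ℝ → ℝ), IsNFunction φ φ' →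
        (∀ t > (0:ℝ), HasDerivAt φ' (φ'' t) t) →
        (∀ t > (0:ℝ), ContinuousAt φ'' t) →
        (∀ t > (0:ℝ), c₁ * φ' t ≤ t * φ'' t ∧ t * φ'' t ≤ c₂ * φ' t) →
        ∀ f : EuclideanSpace ℝ (Fin N × Fin n) → ℝ,
          ContDiff ℝ 1 f →
          ContDiffOn ℝ 2 f {(0 : EuclideanSpace ℝ (Fin N × Fin n))}ᶜ →
          -- strict W^{1,φ}-quasiconvexity
          (∀ (x₀ : EuclideanSpace ℝ (Fin n)) (r : ℝ), 0 < r →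
            ∀ (Q : EuclideanSpace ℝ (Fin N × Fin n))
              (w : EuclideanSpace ℝ (Fin n) → EuclideanSpace ℝ (Fin N)),
              ContDiff ℝ 1 w → HasCompactSupport w → tsupport w ⊆ Metric.ball x₀ r →
              (∫ x in Metric.ball x₀ r, (f (Q + gradMat w x) - f Q)) ≥
                k * ∫ x in Metric.ball x₀ r, shiftFn φ' ‖Q‖ ‖gradMat w x‖) →
          ∀ (Q : EuclideanSpace ℝ (Fin N × Fin n)), Q ≠ 0 →
            ∀ (x₀ : EuclideanSpace ℝ (Fin n)) (r : ℝ), 0 < r →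
              ∀ w : EuclideanSpace ℝ (Fin n) → EuclideanSpace ℝ (Fin N),
                ContDiff ℝ 1 w → HasCompactSupport w →
                tsupport w ⊆ Metric.ball x₀ r →
                (∫ x in Metric.ball x₀ r,
                    fderiv ℝ (fderiv ℝ f) Q (gradMat w x) (gradMat w x)) ≥
                  c * φ'' ‖Q‖ * ∫ x in Metric.ball x₀ r, ‖gradMat w x‖ ^ 2 :=
  quasiconvex_legendre_hadamard_general c₁ c₂ k hc₂ hk
end
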